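/- A unital G-graded ring S is epsilon-strongly graded if and only if it is nearly epsilon-strongly graded and for every g ∈ G the left R-module S_g is finitely generated, where R = S_e. -/

import Mathlib

/-! If `S` is epsilon-strongly graded, write `ε_{g⁻¹} = ∑ cᵢ dᵢ` with `cᵢ ∈ S_{g⁻¹}`, `dᵢ ∈ S_g`;
then `s = s ε_{g⁻¹} = ∑ (s cᵢ) dᵢ` with `s cᵢ ∈ S_e`, so the `dᵢ` generate `S_g`.

Conversely, the finitely many generators of `S_{g⁻¹}` have a common right unit `e` in the
ring `S_g S_{g⁻¹}`, built from the local units by the trick `u + v - u v`. Then `e` is a right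
unit on all of `S_{g⁻¹}`, hence on `S_g S_{g⁻¹}`, and for `s ∈ S_g` the element `e s - s` is
killed by its own left unit `w = w e`; so `ε_g := e` works. -/

open Pointwise

section Defs

variable {G : Type} [AddGroup G] [DecidableEq G]
variable {A : Type} [Ring A]
variable {M : Type} [AddCommGroup M] [Module A M]

/-- The additive subgroup of `M` consisting of finite sums of products `a • m`
with `a ∈ S` and `m ∈ N`. -/
def prodSMul (S : AddSubgroup A) (N : AddSubgroup M) : AddSubgroup M where
  __ := S.toAddSubmonoid • N.toAddSubmonoid
  neg_mem' {x} hx := by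
    refine AddSubmonoid.smul_induction_on hx (fun a ha m hm => ?_) (fun x y hx hy => ?_)
    · rw [show -(a • m) = (-a) • m by rw [neg_smul]]
      exact AddSubmonoid.smul_mem_smul (S.neg_mem ha) hm
    · rw [neg_add]
      exact (S.toAddSubmonoid • N.toAddSubmonoid).add_mem hx hy

/-- A (possibly non-unital) ring, here an additive subgroup of `A` closed under
multiplication, is *s-unital* if every element has a left and a right local unit in it. -/
def IsSUnitalSub (I : AddSubgroup A) : Prop :=
  ∀ a ∈ I, ∃ u ∈ I, ∃ v ∈ I, u * a = a ∧ a * v = a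

variable (𝒜 : G → AddSubgroup A)

/-- `S` is symmetrically graded if `S_g S_{g⁻¹} S_g = S_g` for all `g`. -/
def IsSymmetricallyGraded : Prop := ∀ g : G, 𝒜 g * 𝒜 (-g) * 𝒜 g = 𝒜 g

/-- `S` is nearly epsilon-strongly graded if each `S_g` is an s-unital
`(S_g S_{g⁻¹}, S_{g⁻¹} S_g)`-bimodule: for every `s ∈ S_g` there are
`u ∈ S_g S_{g⁻¹}` and `v ∈ S_{g⁻¹} S_g` with `u s = s = s v`. -/
def IsNearlyEpsilonStrong : Prop :=
  ∀ g : G, ∀ s ∈ 𝒜 g, ∃ u ∈ 𝒜 g * 𝒜 (-g), ∃ v ∈ 𝒜 (-g) * 𝒜 g, u * s = s ∧ s * v = s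

end Defs

section LocalUnits

variable {A : Type*} [Ring A]

theorem AddSubmonoid.exists_fin_sum_of_mem_mul {R : Type*} [NonUnitalNonAssocSemiring R]
    {S T : AddSubmonoid R} {x : R} (hx : x ∈ S * T) :
    ∃ (n : ℕ) (a b : Fin n → R), (∀ i, a i ∈ S) ∧ (∀ i, b i ∈ T) ∧ x = ∑ i, a i * b i := by
  refine AddSubmonoid.mul_induction_on hx
    (fun a ha b hb => ⟨1, fun _ => a, fun _ => b, fun _ => ha, fun _ => hb, by simp⟩) ?_
  rintro x y hx hy
  obtain ⟨n₁, a₁, b₁, ha₁, hb₁, rfl⟩ := hx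
  obtain ⟨n₂, a₂, b₂, ha₂, hb₂, rfl⟩ := hy
  refine ⟨n₁ + n₂, Fin.append a₁ a₂, Fin.append b₁ b₂, ?_, ?_, ?_⟩ <;>
    simp [Fin.forall_fin_add, Fin.sum_univ_add, *]

theorem mul_mem_mul_of_mul_mem_left {M N : AddSubgroup A} {x y : A}
    (hx : ∀ a ∈ M, x * a ∈ M) (hy : y ∈ M * N) : x * y ∈ M * N := by
  refine AddSubmonoid.mul_induction_on hy
    (fun a ha b hb => mul_assoc x a b ▸ AddSubmonoid.mul_mem_mul (hx a ha) hb)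
    (fun y z hy hz => mul_add x y z ▸ add_mem hy hz)

theorem mul_eq_self_of_mem_mul {M N : AddSubgroup A} {e x : A}
    (he : ∀ b ∈ N, b * e = b) (hx : x ∈ M * N) : x * e = x := by
  refine AddSubmonoid.mul_induction_on hx (fun a _ b hb => ?_) (fun x y hx hy => ?_)
  · rw [mul_assoc, he b hb]
  · rw [add_mul, hx, hy]

/-- Since `m * (u + v - u * v) = m * u + (m - m * u) * v`, a right unit `u` of the old elements
and a right unit `v` of `m - m * u` combine into the right unit `u + v - u * v` of both. -/
theorem exists_common_right_unit {I M : AddSubgroup A}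
    (hMI : ∀ m ∈ M, ∀ x ∈ I, m * x ∈ M) (hII : ∀ x ∈ I, ∀ y ∈ I, x * y ∈ I)
    (hunit : ∀ m ∈ M, ∃ v ∈ I, m * v = m) {ι : Type*} (s : Finset ι) (t : ι → A)
    (ht : ∀ i ∈ s, t i ∈ M) : ∃ v ∈ I, ∀ i ∈ s, t i * v = t i := by
  induction s using Finset.cons_induction with
  | empty => exact ⟨0, I.zero_mem, by simp⟩
  | cons j s _ ih =>
    simp only [Finset.mem_cons, forall_eq_or_imp] at ht ⊢
    obtain ⟨u, hu, hus⟩ := ih ht.2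
    obtain ⟨v, hv, hv'⟩ := hunit _ (M.sub_mem ht.1 (hMI _ ht.1 u hu))
    have expand (m : A) : m * (u + v - u * v) = m * u + (m - m * u) * v := by noncomm_ring
    refine ⟨u + v - u * v, I.sub_mem (I.add_mem hu hv) (hII u hu v hv), ?_, fun i hi => ?_⟩
    · rw [expand, hv', add_sub_cancel]
    · rw [expand, hus i hi, sub_self, zero_mul, add_zero]

theorem exists_right_unit_of_fg {I M : AddSubgroup A}
    (hMI : ∀ m ∈ M, ∀ x ∈ I, m * x ∈ M) (hII : ∀ x ∈ I, ∀ y ∈ I, x * y ∈ I)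
    (hunit : ∀ m ∈ M, ∃ v ∈ I, m * v = m) {n : ℕ} (t : Fin n → A) (ht : ∀ i, t i ∈ M)
    (hspan : ∀ m ∈ M, ∃ r : Fin n → A, m = ∑ i, r i * t i) :
    ∃ v ∈ I, ∀ m ∈ M, m * v = m := by
  obtain ⟨v, hv, htv⟩ :=
    exists_common_right_unit hMI hII hunit Finset.univ t fun i _ => ht i
  refine ⟨v, hv, fun m hm => ?_⟩
  obtain ⟨r, rfl⟩ := hspan m hm
  simp only [Finset.sum_mul, mul_assoc, htv _ (Finset.mem_univ _)]

theorem mul_eq_self_of_left_units {I M : AddSubgroup A} {e : A}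
    (heM : ∀ m ∈ M, e * m ∈ M) (hunit : ∀ m ∈ M, ∃ w ∈ I, w * m = m)
    (he : ∀ w ∈ I, w * e = w) {m : A} (hm : m ∈ M) : e * m = m := by
  obtain ⟨w, hw, hwm⟩ := hunit _ (M.sub_mem (heM m hm) hm)
  rw [← sub_eq_zero, ← hwm, mul_sub, ← mul_assoc, he w hw, sub_self]

end LocalUnits

section Graded

variable {G : Type} [AddGroup G] {A : Type} [Ring A] (𝒜 : G → AddSubgroup A)
  [SetLike.GradedMonoid 𝒜]

theorem mem_grade_add_of_mem_mul {g h : G} {x : A} (hx : x ∈ 𝒜 g * 𝒜 h) : x ∈ 𝒜 (g + h) :=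
  (AddSubmonoid.mul_le (P := (𝒜 (g + h)).toAddSubmonoid)).mpr
    (fun _ ha _ hb => SetLike.mul_mem_graded (A := 𝒜) ha hb) hx

theorem mem_grade_zero_of_mem_mul_neg {g : G} {x : A} (hx : x ∈ 𝒜 g * 𝒜 (-g)) : x ∈ 𝒜 0 :=
  add_neg_cancel g ▸ mem_grade_add_of_mem_mul 𝒜 hx

theorem exists_fin_generators_of_right_unit {g : G} {ε : A} (hε : ε ∈ 𝒜 (-g) * 𝒜 g)
    (hright : ∀ s ∈ 𝒜 g, s * ε = s) :
    ∃ (n : ℕ) (t : Fin n → A), (∀ i, t i ∈ 𝒜 g) ∧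
      ∀ s ∈ 𝒜 g, ∃ r : Fin n → A, (∀ i, r i ∈ 𝒜 0) ∧ s = ∑ i, r i * t i := by
  obtain ⟨n, c, d, hc, hd, rfl⟩ := AddSubmonoid.exists_fin_sum_of_mem_mul hε
  refine ⟨n, d, hd, fun s hs => ⟨fun i => s * c i, fun i => ?_, ?_⟩⟩
  · exact add_neg_cancel g ▸ SetLike.mul_mem_graded hs (hc i)
  · conv_lhs => rw [← hright s hs]
    simp only [Finset.mul_sum, mul_assoc]

theorem exists_epsilon_of_nearlyEpsilonStrong [DecidableEq G] (hN : IsNearlyEpsilonStrong 𝒜)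
    {g : G} {n : ℕ} (t : Fin n → A) (ht : ∀ i, t i ∈ 𝒜 (-g))
    (hspan : ∀ s ∈ 𝒜 (-g), ∃ r : Fin n → A, s = ∑ i, r i * t i) :
    ∃ e ∈ 𝒜 g * 𝒜 (-g), (∀ s ∈ 𝒜 g, e * s = s) ∧ ∀ s ∈ 𝒜 (-g), s * e = s := by
  have grade_zero {x : A} (hx : x ∈ 𝒜 g * 𝒜 (-g)) := mem_grade_zero_of_mem_mul_neg 𝒜 hx
  have right_mul : ∀ m ∈ 𝒜 (-g), ∀ x ∈ 𝒜 g * 𝒜 (-g), m * x ∈ 𝒜 (-g) := fun m hm x hx =>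
    add_zero (-g) ▸ SetLike.mul_mem_graded hm (grade_zero hx)
  have left_mul : ∀ x ∈ 𝒜 g * 𝒜 (-g), ∀ m ∈ 𝒜 g, x * m ∈ 𝒜 g := fun x hx m hm =>
    zero_add g ▸ SetLike.mul_mem_graded (grade_zero hx) hm
  have mul_closed : ∀ x ∈ 𝒜 g * 𝒜 (-g), ∀ y ∈ 𝒜 g * 𝒜 (-g), x * y ∈ 𝒜 g * 𝒜 (-g) :=
    fun x hx _ hy => mul_mem_mul_of_mul_mem_left (left_mul x hx) hy
  have right_units : ∀ m ∈ 𝒜 (-g), ∃ v ∈ 𝒜 g * 𝒜 (-g), m * v = m := fun m hm => by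
    obtain ⟨_, _, v, hv, _, hmv⟩ := hN (-g) m hm
    rw [neg_neg] at hv
    exact ⟨v, hv, hmv⟩
  have left_units : ∀ m ∈ 𝒜 g, ∃ w ∈ 𝒜 g * 𝒜 (-g), w * m = m := fun m hm => by
    obtain ⟨w, hw, _, _, hwm, _⟩ := hN g m hm
    exact ⟨w, hw, hwm⟩
  obtain ⟨e, he, hright⟩ :=
    exists_right_unit_of_fg right_mul mul_closed right_units t ht hspan
  exact ⟨e, he, fun s hs => mul_eq_self_of_left_units (left_mul e he) left_units
    (fun w hw => mul_eq_self_of_mem_mul hright hw) hs, hright⟩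

end Graded

theorem epsilonStrong_iff_nearlyEpsilonStrong_and_fg
    {G : Type} [AddGroup G] [DecidableEq G]
    {A : Type} [Ring A] (𝒜 : G → AddSubgroup A) [GradedRing 𝒜] :
    (∃ ε : G → A, ∀ g : G, ε g ∈ 𝒜 g * 𝒜 (-g) ∧
        ∀ s ∈ 𝒜 g, ε g * s = s ∧ s * ε (-g) = s) ↔
      (IsNearlyEpsilonStrong 𝒜 ∧
        ∀ g : G, ∃ (n : ℕ) (t : Fin n → A), (∀ i, t i ∈ 𝒜 g) ∧
          ∀ s ∈ 𝒜 g, ∃ r : Fin n → A, (∀ i, r i ∈ 𝒜 0) ∧ s = ∑ i, r i * t i) := by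
  constructor
  · rintro ⟨ε, hε⟩
    have mem_neg (g : G) : ε (-g) ∈ 𝒜 (-g) * 𝒜 g := by simpa using (hε (-g)).1
    refine ⟨fun g s hs => ⟨ε g, (hε g).1, ε (-g), mem_neg g, (hε g).2 s hs⟩,
      fun g => exists_fin_generators_of_right_unit 𝒜 (mem_neg g) fun s hs => ((hε g).2 s hs).2⟩
  · rintro ⟨hN, hfg⟩
    have key (g : G) : ∃ e ∈ 𝒜 g * 𝒜 (-g), (∀ s ∈ 𝒜 g, e * s = s) ∧ ∀ s ∈ 𝒜 (-g), s * e = s := by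
      obtain ⟨n, t, ht, hspan⟩ := hfg (-g)
      exact exists_epsilon_of_nearlyEpsilonStrong 𝒜 hN t ht fun s hs =>
        (hspan s hs).imp fun _ => And.right
    choose ε hε hleft hright using key
    exact ⟨ε, fun g => ⟨hε g, fun s hs => ⟨hleft g s hs, hright (-g) s (by rwa [neg_neg])⟩⟩⟩
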